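/- In the ring R the following identities hold: for every 0 ≤ i ≤ 2, â_i = Σ_{j=0}^{i} ĉ_j · C(2−j, 2−i) · (−ĉ1/(2ĉ0))^{i−j}, and for every 0 ≤ i ≤ 3, b̂_i = Σ_{j=0}^{i} d̂_j · C(3−j, 3−i) · (−ĉ1/(2ĉ0))^{i−j} (note ĉ0 = α0 is invertible in R). That is, the elements â_i, b̂_i, ĉ_i, d̂_i satisfy the same relations as the Seiberg–Witten curve coefficients a_i, b_i, c_i, d_i. -/
import Mathlib


open MvPolynomial Complex

/-- The ring `R`: we realize the localization of `ℂ[α0,α1,α2,β0,β1,β2,β3]` at `α0, β0`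
inside the fraction field, where `α0` and `β0` are invertible. -/
noncomputable abbrev Frac : Type := FractionRing (MvPolynomial (Fin 7) ℂ)

/-- `α0, α1, α2` (coefficients of the binary quadratic) -/
noncomputable def alph : ℕ → Frac
  | 0 => algebraMap (MvPolynomial (Fin 7) ℂ) Frac (X 0)
  | 1 => algebraMap (MvPolynomial (Fin 7) ℂ) Frac (X 1)
  | 2 => algebraMap (MvPolynomial (Fin 7) ℂ) Frac (X 2)
  | _ => 0

/-- `β0, β1, β2, β3` (coefficients of the binary cubic) -/
noncomputable def bet : ℕ → Frac
  | 0 => algebraMap (MvPolynomial (Fin 7) ℂ) Frac (X 3)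
  | 1 => algebraMap (MvPolynomial (Fin 7) ℂ) Frac (X 4)
  | 2 => algebraMap (MvPolynomial (Fin 7) ℂ) Frac (X 5)
  | 3 => algebraMap (MvPolynomial (Fin 7) ℂ) Frac (X 6)
  | _ => 0

/-- `â_i = Σ_{j=0}^{i} α_j · C(2−j, 2−i) · (−α1/(2α0))^{i−j}` -/
noncomputable def ahat (i : ℕ) : Frac :=
  ∑ j ∈ Finset.range (i + 1),
    alph j * (Nat.choose (2 - j) (2 - i) : Frac) * (-alph 1 / (2 * alph 0)) ^ (i - j)

/-- `b̂_i = Σ_{j=0}^{i} β_j · C(3−j, 3−i) · (−α1/(2α0))^{i−j}` -/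
noncomputable def bhat (i : ℕ) : Frac :=
  ∑ j ∈ Finset.range (i + 1),
    bet j * (Nat.choose (3 - j) (3 - i) : Frac) * (-alph 1 / (2 * alph 0)) ^ (i - j)

/-- `ĉ_i = Σ_{j=0}^{i} α_j · C(2−j, 2−i) · (−β1/(3β0))^{i−j}` -/
noncomputable def chat (i : ℕ) : Frac :=
  ∑ j ∈ Finset.range (i + 1),
    alph j * (Nat.choose (2 - j) (2 - i) : Frac) * (-bet 1 / (3 * bet 0)) ^ (i - j)

/-- `d̂_i = Σ_{j=0}^{i} β_j · C(3−j, 3−i) · (−β1/(3β0))^{i−j}` -/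
noncomputable def dhat (i : ℕ) : Frac :=
  ∑ j ∈ Finset.range (i + 1),
    bet j * (Nat.choose (3 - j) (3 - i) : Frac) * (-bet 1 / (3 * bet 0)) ^ (i - j)

lemma alph0_ne : alph 0 ≠ 0 := by
  simp only [alph]
  rw [map_ne_zero_iff _ (IsFractionRing.injective (MvPolynomial (Fin 7) ℂ) Frac)]
  exact MvPolynomial.X_ne_zero 0

lemma bet0_ne : bet 0 ≠ 0 := by
  simp only [bet]
  rw [map_ne_zero_iff _ (IsFractionRing.injective (MvPolynomial (Fin 7) ℂ) Frac)]
  exact MvPolynomial.X_ne_zero 3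

set_option maxHeartbeats 2000000
set_option synthInstance.maxHeartbeats 400000

lemma key : -chat 1 / (2 * chat 0) =
    -alph 1 / (2 * alph 0) - -bet 1 / (3 * bet 0) := by
  have ha := alph0_ne
  have hb := bet0_ne
  simp only [chat, Finset.sum_range_succ, Finset.sum_range_zero]
  norm_num
  field_simp
  ring_nf
  try field_simp
  try ring

/-- The elements `â_i, b̂_i, ĉ_i, d̂_i` satisfy the same relations as the Seiberg–Witten curve
coefficients: `â_i = Σ_j ĉ_j·C(2−j,2−i)·(−ĉ1/(2ĉ0))^{i−j}` for `i ≤ 2`, and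
`b̂_i = Σ_j d̂_j·C(3−j,3−i)·(−ĉ1/(2ĉ0))^{i−j}` for `i ≤ 3`. -/
theorem stmt_10 :
    (∀ i ≤ 2, ahat i =
      ∑ j ∈ Finset.range (i + 1),
        chat j * (Nat.choose (2 - j) (2 - i) : Frac) * (-chat 1 / (2 * chat 0)) ^ (i - j)) ∧
    (∀ i ≤ 3, bhat i =
      ∑ j ∈ Finset.range (i + 1),
        dhat j * (Nat.choose (3 - j) (3 - i) : Frac) * (-chat 1 / (2 * chat 0)) ^ (i - j)) := by
  constructor
  · intro i hi
    interval_cases i <;>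
    · rw [key]
      simp only [ahat, chat, Finset.sum_range_succ, Finset.sum_range_zero]
      generalize -alph 1 / (2 * alph 0) = s
      generalize -bet 1 / (3 * bet 0) = t
      norm_num
      try ring
  · intro i hi
    interval_cases i <;>
    · rw [key]
      simp only [bhat, dhat, Finset.sum_range_succ, Finset.sum_range_zero]
      generalize -alph 1 / (2 * alph 0) = s
      generalize -bet 1 / (3 * bet 0) = t
      norm_num
      try ring
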